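/- Let P be a k-dimensional polytope (k ≥ 1) and let Disp(i;P) denote the optimal dispersion distance for i points in P (minimum over pairwise distances and distances to the boundary, maximized over placements). Then for every i ≥ 1, Disp(i;P) ≤ 2·Disp(2i;P). -/

import Mathlib

/-! Shift every point of a placement of `i` points with dispersion `d` by `±d/4` along a fixed
direction. The two copies of one point are `d/2` apart, copies of different points are at
least `d - 2·d/4` apart, and distances to the frontier drop by at most `d/4`; the shifted points
stay in `P` because the open ball around a point of `P` of radius its distance to the frontier
is a connected set missing the frontier. -/

/-- `disp k n P`: the optimal dispersion distance for `n` points in `P ⊆ ℝᵏ`. -/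
noncomputable def disp (k n : ℕ) (P : Set (EuclideanSpace ℝ (Fin k))) : ℝ :=
  sSup {d : ℝ | ∃ X : Fin n → EuclideanSpace ℝ (Fin k),
    (∀ i, X i ∈ P) ∧ (∀ i, d ≤ Metric.infDist (X i) (frontier P)) ∧
      ∀ i j, i ≠ j → d ≤ dist (X i) (X j)}

open Metric Set

theorem IsPreconnected.subset_of_disjoint_frontier {α : Type*} [TopologicalSpace α]
    {s P : Set α} (hs : IsPreconnected s) (hsP : Disjoint s (frontier P))
    (hne : (s ∩ P).Nonempty) : s ⊆ P := by
  have hsub : s ⊆ interior P ∪ interior Pᶜ := by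
    rw [← compl_frontier_eq_union_interior]
    exact hsP.subset_compl_right
  obtain ⟨x, hxs, hxP⟩ := hne
  have hx : x ∈ interior P := (hsub hxs).resolve_right fun h => interior_subset h hxP
  exact (hs.subset_left_of_subset_union isOpen_interior isOpen_interior
    (disjoint_compl_right.mono interior_subset interior_subset) hsub ⟨x, hxs, hx⟩).trans
    interior_subset

theorem Metric.ball_infDist_frontier_subset {E : Type*} [SeminormedAddCommGroup E]
    [NormedSpace ℝ E] {P : Set E} {x : E} (hx : x ∈ P) :
    ball x (infDist x (frontier P)) ⊆ P := by
  rcases (ball x (infDist x (frontier P))).eq_empty_or_nonempty with h | h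
  · simp [h]
  · exact (convex_ball _ _).isPreconnected.subset_of_disjoint_frontier disjoint_ball_infDist
      ⟨x, nonempty_ball.mp h |> mem_ball_self, hx⟩

def IsDispersed {E ι : Type*} [PseudoMetricSpace E] (P : Set E) (d : ℝ) (X : ι → E) : Prop :=
  (∀ i, X i ∈ P) ∧ (∀ i, d ≤ infDist (X i) (frontier P)) ∧ ∀ i j, i ≠ j → d ≤ dist (X i) (X j)

theorem disp_eq_sSup (k n : ℕ) (P : Set (EuclideanSpace ℝ (Fin k))) :
    disp k n P = sSup {d | ∃ X : Fin n → EuclideanSpace ℝ (Fin k), IsDispersed P d X} :=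
  rfl

section IsDispersed

variable {E ι : Type*} [PseudoMetricSpace E] {P : Set E} {d : ℝ} {X : ι → E}

theorem isDispersed_zero_iff : IsDispersed P 0 X ↔ ∀ i, X i ∈ P :=
  ⟨fun h => h.1, fun h => ⟨h, fun _ => infDist_nonneg, fun _ _ _ => dist_nonneg⟩⟩

theorem IsDispersed.comp_injective {ι' : Type*} (hX : IsDispersed P d X) {f : ι' → ι}
    (hf : f.Injective) : IsDispersed P d (X ∘ f) :=
  ⟨fun i => hX.1 (f i), fun i => hX.2.1 (f i), fun _ _ hij => hX.2.2 _ _ (hf.ne hij)⟩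

theorem bddAbove_setOf_isDispersed [Nontrivial ι] (hP : Bornology.IsBounded P) :
    BddAbove {d | ∃ X : ι → E, IsDispersed P d X} := by
  obtain ⟨_, _, hij⟩ := exists_pair_ne ι
  exact ⟨diam P, fun _ ⟨X, hX⟩ =>
    (hX.2.2 _ _ hij).trans (dist_le_diam_of_mem hP (hX.1 _) (hX.1 _))⟩

end IsDispersed

theorem IsDispersed.add_offsets {E ι σ : Type*} [NormedAddCommGroup E] [NormedSpace ℝ E]
    {P : Set E} {d e r : ℝ} {X : ι → E} (hX : IsDispersed P d X) {w : σ → E}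
    (hw : ∀ s, ‖w s‖ ≤ r) (hrd : r < d) (he : e ≤ d - 2 * r)
    (hwe : ∀ s t, s ≠ t → e ≤ dist (w s) (w t)) :
    IsDispersed P e (fun p : σ × ι => X p.2 + w p.1) := by
  have hdist : ∀ s i, dist (X i + w s) (X i) ≤ r := fun s i => by
    simpa [dist_eq_norm] using hw s
  refine ⟨fun ⟨s, i⟩ => ?_, fun ⟨s, i⟩ => ?_, fun ⟨s, i⟩ ⟨t, j⟩ hne => ?_⟩
  · exact ball_infDist_frontier_subset (hX.1 i) <|
      mem_ball.mpr ((hdist s i).trans_lt (hrd.trans_le (hX.2.1 i)))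
  · have := infDist_le_infDist_add_dist (x := X i) (y := X i + w s) (s := frontier P)
    have := hX.2.1 i
    have := (norm_nonneg (w s)).trans (hw s)
    linarith [dist_comm (X i) (X i + w s), hdist s i]
  · by_cases hij : i = j
    · subst hij
      have hst : s ≠ t := fun h => hne (by rw [h])
      simpa [dist_add_left] using hwe s t hst
    · have := dist_triangle4 (X i) (X i + w s) (X j + w t) (X j)
      linarith [hX.2.2 i j hij, dist_comm (X i) (X i + w s), hdist s i, hdist t j]

theorem IsDispersed.exists_doubled_half {E ι : Type*} [NormedAddCommGroup E] [NormedSpace ℝ E]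
    [Nontrivial E] {P : Set E} {d : ℝ} {X : ι → E} (hX : IsDispersed P d X) (hd : 0 < d) :
    ∃ Y : Fin 2 × ι → E, IsDispersed P (d / 2) Y := by
  obtain ⟨v, hv⟩ := exists_norm_eq E (by positivity : 0 ≤ d / 4)
  refine ⟨_, hX.add_offsets (w := ![v, -v]) (r := d / 4) ?_ (by linarith) (by linarith) ?_⟩
  · intro s; fin_cases s <;> simp [hv]
  · have : dist v (-v) = d / 2 := by
      rw [dist_eq_norm, sub_neg_eq_add, ← two_smul ℝ v, norm_smul, hv]; norm_num; ring
    intro s t hst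
    fin_cases s <;> fin_cases t <;> simp_all [dist_comm]

theorem disp_nonneg (k n : ℕ) (P : Set (EuclideanSpace ℝ (Fin k))) : 0 ≤ disp k n P := by
  rw [disp_eq_sSup]
  rcases eq_empty_or_nonempty {d | ∃ X : Fin n → EuclideanSpace ℝ (Fin k), IsDispersed P d X}
    with h | ⟨_, X, hX⟩
  · simp [h]
  · exact Real.sSup_nonneg' ⟨0, ⟨X, isDispersed_zero_iff.mpr hX.1⟩, le_rfl⟩

theorem le_disp_of_isDispersed {k n : ℕ} (hn : 2 ≤ n) {P : Set (EuclideanSpace ℝ (Fin k))}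
    (hP : Bornology.IsBounded P) {d : ℝ} {X : Fin n → EuclideanSpace ℝ (Fin k)}
    (hX : IsDispersed P d X) : d ≤ disp k n P :=
  have : Nontrivial (Fin n) := Fin.nontrivial_iff_two_le.mpr hn
  le_csSup (bddAbove_setOf_isDispersed hP) ⟨X, hX⟩

theorem disp_le_two_mul_disp_double_general (k : ℕ) (hk : 1 ≤ k)
    (P : Set (EuclideanSpace ℝ (Fin k)))
    (hcpt : IsCompact P) :
    ∀ i : ℕ, 1 ≤ i → disp k i P ≤ 2 * disp k (2 * i) P := by
  intro i hi
  have : Nonempty (Fin k) := ⟨⟨0, hk⟩⟩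
  refine Real.sSup_le (fun d ⟨X, hX⟩ => ?_) (by linarith [disp_nonneg k (2 * i) P])
  rcases le_or_gt d 0 with hd | hd
  · linarith [disp_nonneg k (2 * i) P]
  · obtain ⟨Y, hY⟩ := IsDispersed.exists_doubled_half hX hd
    linarith [le_disp_of_isDispersed (by omega) hcpt.isBounded
      (hY.comp_injective finProdFinEquiv.symm.injective)]

/-- Claim 9: `Disp(i;P) ≤ 2·Disp(2i;P)` for every `i ≥ 1`. -/
theorem disp_le_two_mul_disp_double (k : ℕ) (hk : 1 ≤ k)
    (P : Set (EuclideanSpace ℝ (Fin k)))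
    (hcpt : IsCompact P) (hint : (interior P).Nonempty) :
    ∀ i : ℕ, 1 ≤ i → disp k i P ≤ 2 * disp k (2 * i) P :=
  disp_le_two_mul_disp_double_general k hk P hcpt
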